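/- arXiv:2507.05471 — 4 statements merged into one kernel-verified Lean document; each statement's English description precedes it below -/
import Mathlib

section
/- There exists a family of functions ⟨φ_α : α → ω | α < ω₁⟩ such that (1) for all α < β < ω₁, φ_α and φ_β↾α differ at only finitely many coordinates, and (2) each φ_α is finite-to-one, i.e., φ_α⁻¹({i}) is finite for every i < ω. -/
open Cardinal Ordinal Set

namespace CohFam
noncomputable section

def emb {β α : Ordinal} (h : β ≤ α) (x : Set.Iio β) : Set.Iio α := ⟨x.1, lt_of_lt_of_le x.2 h⟩

def FinOne {α : Ordinal} (f : Set.Iio α → ℕ) : Prop := ∀ i, {x | f x = i}.Finite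

def Agree {β α : Ordinal} (h : β ≤ α) (f : Set.Iio α → ℕ) (g : Set.Iio β → ℕ) : Prop :=
  {x : Set.Iio β | f (emb h x) ≠ g x}.Finite

lemma emb_inj {β α : Ordinal} (h : β ≤ α) : Function.Injective (emb h) := by
  intro x y hxy
  exact Subtype.ext (congrArg Subtype.val hxy : (emb h x).1 = (emb h y).1)

lemma countable_Iio {α : Ordinal} (hα : α < (aleph 1).ord) : Countable (Set.Iio α) := by
  have h1 : α.card < aleph 1 := (Cardinal.lt_ord).1 hα
  have : (Set.Iio α).Countable := by
    rw [countable_iff_lt_aleph_one, Ordinal.mk_Iio_ordinal]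
    have h2 := Cardinal.lift_lt.2 h1
    simpa using h2
  exact this.to_subtype

lemma FinOne.le_fiber {α : Ordinal} {f : Set.Iio α → ℕ} (hf : FinOne f) (i : ℕ) :
    {x | f x ≤ i}.Finite := by
  have he : {x | f x ≤ i} = ⋃ j ∈ Finset.Iic i, {x | f x = j} := by
    ext x
    simp only [Set.mem_setOf_eq, Set.mem_iUnion, Finset.mem_Iic]
    exact ⟨fun h => ⟨f x, h, rfl⟩, fun ⟨j, hj, hh⟩ => hh ▸ hj⟩
  rw [he]
  exact Set.Finite.biUnion (Finset.Iic i).finite_toSet (fun j _ => hf j)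

/-- The cofinal ladder. -/
def seqA (b : ℕ → Ordinal) : ℕ → Ordinal
  | 0 => 0
  | n + 1 => max (seqA b n) (b n) + 1

/-- The tower of partial amalgamations. -/
def tow (b : ℕ → Ordinal) (g : (β : Ordinal) → Set.Iio β → ℕ) :
    (n : ℕ) → Set.Iio (seqA b n) → ℕ
  | 0 => fun _ => 0
  | n + 1 => fun x =>
      if h : x.1 < seqA b n then tow b g n ⟨x.1, h⟩ else max (g (seqA b (n + 1)) x) n

lemma extend (α : Ordinal) (hα : α < (aleph 1).ord)
    (g : (β : Ordinal) → Set.Iio β → ℕ)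
    (hfin : ∀ β, β < α → FinOne (g β))
    (hcoh : ∀ β γ (h : β < γ), γ < α → Agree h.le (g γ) (g β)) :
    ∃ f : Set.Iio α → ℕ, FinOne f ∧ ∀ β (hβ : β < α), Agree hβ.le f (g β) := by
  rcases Ordinal.zero_or_succ_or_isSuccLimit α with h0 | ⟨γ, hs⟩ | hlim
  · subst h0
    haveI : IsEmpty (Set.Iio (0 : Ordinal)) := ⟨fun x => not_lt_zero (a := x.1) x.2⟩
    exact ⟨fun _ => 0, fun i => Set.toFinite _,
      fun β hβ => absurd hβ not_lt_zero⟩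
  · subst hs
    refine ⟨fun x => if h : x.1 < γ then g γ ⟨x.1, h⟩ else 0, ?_, ?_⟩
    · intro i
      have hsub : {x : Set.Iio (Order.succ γ) |
            (if h : x.1 < γ then g γ ⟨x.1, h⟩ else 0) = i} ⊆
          (emb (Order.le_succ γ) '' {y | g γ y = i}) ∪ {⟨γ, Order.lt_succ γ⟩} := by
        intro x hx
        by_cases h : x.1 < γ
        · left
          refine ⟨⟨x.1, h⟩, ?_, Subtype.ext rfl⟩
          simpa [h] using hx
        · right
          have : x.1 = γ := le_antisymm (Order.lt_succ_iff.1 x.2) (not_lt.1 h)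
          exact Set.mem_singleton_iff.2 (Subtype.ext this)
      exact (((hfin γ (Order.lt_succ γ) i).image _).union (Set.finite_singleton _)).subset hsub
    · intro β hβ
      have hβγ : β ≤ γ := Order.lt_succ_iff.1 hβ
      rcases lt_or_eq_of_le hβγ with hlt | rfl
      · have hsub : {x : Set.Iio β |
              (if h : (emb hβ.le x).1 < γ then g γ ⟨(emb hβ.le x).1, h⟩ else 0) ≠ g β x} ⊆
            {x : Set.Iio β | g γ (emb hβγ x) ≠ g β x} := by
          intro x hx
          have h : x.1 < γ := lt_of_lt_of_le x.2 hβγ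
          simpa [emb, h] using hx
        exact (hcoh β γ hlt (Order.lt_succ γ)).subset hsub
      · have hsub : {x : Set.Iio β |
              (if h : (emb hβ.le x).1 < β then g β ⟨(emb hβ.le x).1, h⟩ else 0) ≠ g β x} ⊆
            (∅ : Set (Set.Iio β)) := by
          intro x hx
          have h : x.1 < β := x.2
          simp only [Set.mem_setOf_eq, emb] at hx
          simp only [h, ↓reduceDIte] at hx
          exact absurd (congrArg (g β) (Subtype.ext rfl : (⟨x.1, h⟩ : Set.Iio β) = x)) hx
        exact Set.finite_empty.subset hsub
  · -- limit case
    haveI := countable_Iio hα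
    haveI : Nonempty (Set.Iio α) := ⟨⟨0, hlim.pos⟩⟩
    obtain ⟨e, he⟩ := exists_surjective_nat (Set.Iio α)
    set A : ℕ → Ordinal := seqA (fun n => (e n).1) with hAdef
    have hA : ∀ n, A n < α := by
      intro n
      induction n with
      | zero => exact hlim.pos
      | succ n ih =>
        have h1 : max (A n) (e n).1 < α := max_lt ih (e n).2
        have h2 := hlim.succ_lt h1
        rw [← Ordinal.add_one_eq_succ] at h2
        exact h2
    have hstep : ∀ n, A n < A (n + 1) := by
      intro n
      show A n < max (A n) (e n).1 + 1
      calc A n ≤ max (A n) (e n).1 := le_max_left _ _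
        _ < max (A n) (e n).1 + 1 := by
            rw [Ordinal.add_one_eq_succ]; exact Order.lt_succ _
    have hmono : ∀ {m n : ℕ}, m ≤ n → A m ≤ A n :=
      fun h => ((strictMono_nat_of_lt_succ hstep).monotone h)
    have hcof : ∀ x : Set.Iio α, ∃ n, x.1 < A n := by
      intro x
      obtain ⟨n, hn⟩ := he x
      refine ⟨n + 1, ?_⟩
      show x.1 < max (A n) (e n).1 + 1
      calc x.1 = (e n).1 := by rw [hn]
        _ ≤ max (A n) (e n).1 := le_max_right _ _
        _ < max (A n) (e n).1 + 1 := by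
            rw [Ordinal.add_one_eq_succ]; exact Order.lt_succ _
    set t : (n : ℕ) → Set.Iio (A n) → ℕ := tow (fun n => (e n).1) g with htdef
    have tsucc : ∀ n (x : Set.Iio (A (n + 1))),
        t (n + 1) x = if h : x.1 < A n then t n ⟨x.1, h⟩ else max (g (A (n + 1)) x) n :=
      fun n x => rfl
    haveI hE0 : IsEmpty (Set.Iio (A 0)) := ⟨fun x => not_lt_zero (a := x.1) x.2⟩
    -- finite-to-one of each tower level
    have hfin_t : ∀ n, FinOne (t n) := by
      intro n
      induction n with
      | zero => intro i; exact Set.toFinite _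
      | succ n ih =>
        intro i
        have hsub : {x : Set.Iio (A (n + 1)) | t (n + 1) x = i} ⊆
            (emb (hstep n).le '' {y | t n y = i}) ∪ {x | g (A (n + 1)) x ≤ i} := by
          intro x hx
          have hx' : t (n + 1) x = i := hx
          by_cases h : x.1 < A n
          · left
            refine ⟨⟨x.1, h⟩, ?_, Subtype.ext rfl⟩
            rw [tsucc n x, dif_pos h] at hx'
            exact hx'
          · right
            rw [tsucc n x, dif_neg h] at hx'
            have h5 := le_max_left (g (A (n + 1)) x) n
            rwa [hx'] at h5
        exact (((ih i).image _).union ((hfin (A (n + 1)) (hA _)).le_fiber i)).subset hsub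
    -- closeness of each tower level to the given family
    have hclose : ∀ n, {y : Set.Iio (A n) | t n y ≠ g (A n) y}.Finite := by
      intro n
      induction n with
      | zero => exact Set.toFinite _
      | succ n ih =>
        have hfin2 : {y : Set.Iio (A n) | g (A n) y ≠ g (A (n + 1)) (emb (hstep n).le y)}.Finite := by
          have h2 := hcoh (A n) (A (n + 1)) (hstep n) (hA (n + 1))
          exact h2.subset (fun y hy => Ne.symm hy)
        have hsub : {x : Set.Iio (A (n + 1)) | t (n + 1) x ≠ g (A (n + 1)) x} ⊆
            (emb (hstep n).le '' ({y | t n y ≠ g (A n) y} ∪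
              {y | g (A n) y ≠ g (A (n + 1)) (emb (hstep n).le y)})) ∪
            {x | g (A (n + 1)) x ≤ n} := by
          intro x hx
          have hx' : t (n + 1) x ≠ g (A (n + 1)) x := hx
          by_cases h : x.1 < A n
          · left
            refine ⟨⟨x.1, h⟩, ?_, Subtype.ext rfl⟩
            rw [tsucc n x, dif_pos h] at hx'
            by_cases h2 : t n ⟨x.1, h⟩ = g (A n) ⟨x.1, h⟩
            · right
              show g (A n) _ ≠ g (A (n + 1)) (emb (hstep n).le ⟨x.1, h⟩)
              have hee : emb (hstep n).le (⟨x.1, h⟩ : Set.Iio (A n)) = x := Subtype.ext rfl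
              rw [hee, ← h2]
              exact hx'
            · left; exact h2
          · right
            rw [tsucc n x, dif_neg h] at hx'
            have hlt : g (A (n + 1)) x < n := by
              by_contra hc
              exact hx' (max_eq_left (not_lt.1 hc))
            exact hlt.le
        exact ((((ih.union hfin2).image _)).union
          ((hfin _ (hA _)).le_fiber n)).subset hsub
    -- tower levels extend each other exactly
    have hext : ∀ m n (h : m ≤ n) (y : Set.Iio (A m)), t n (emb (hmono h) y) = t m y := by
      intro m n h
      induction n, h using Nat.le_induction with
      | base => intro y; exact congrArg (t m) (Subtype.ext rfl)
      | succ n hn ih =>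
        intro y
        have h' : (emb (hmono (Nat.le_succ_of_le hn)) y).1 < A n := lt_of_lt_of_le y.2 (hmono hn)
        rw [tsucc n (emb (hmono (Nat.le_succ_of_le hn)) y), dif_pos h']
        exact (congrArg (t n) (Subtype.ext rfl : (⟨_, h'⟩ : Set.Iio (A n)) = emb (hmono hn) y)).trans (ih y)
    -- the amalgamated function
    have hNlt : ∀ x : Set.Iio α, x.1 < A (Nat.find (hcof x)) := fun x => Nat.find_spec (hcof x)
    set f : Set.Iio α → ℕ := fun x => t (Nat.find (hcof x)) ⟨x.1, hNlt x⟩ with hfdef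
    have hf_eq : ∀ (x : Set.Iio α) n (h : x.1 < A n), f x = t n ⟨x.1, h⟩ := by
      intro x n h
      rcases le_total (Nat.find (hcof x)) n with hmn | hmn
      · have h2 := hext (Nat.find (hcof x)) n hmn ⟨x.1, hNlt x⟩
        calc f x = t (Nat.find (hcof x)) ⟨x.1, hNlt x⟩ := rfl
          _ = t n (emb (hmono hmn) ⟨x.1, hNlt x⟩) := h2.symm
          _ = t n ⟨x.1, h⟩ := congrArg (t n) (Subtype.ext rfl)
      · have h2 := hext n (Nat.find (hcof x)) hmn ⟨x.1, h⟩
        calc f x = t (Nat.find (hcof x)) ⟨x.1, hNlt x⟩ := rfl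
          _ = t (Nat.find (hcof x)) (emb (hmono hmn) ⟨x.1, h⟩) :=
              congrArg (t (Nat.find (hcof x))) (Subtype.ext rfl)
          _ = t n ⟨x.1, h⟩ := h2
    have hlow : ∀ (x : Set.Iio α) n, ¬ x.1 < A n → x.1 < A (n + 1) → n ≤ f x := by
      intro x n hn h
      rw [hf_eq x (n + 1) h, tsucc n ⟨x.1, h⟩, dif_neg hn]
      exact le_max_right _ _
    have hfinf : FinOne f := by
      intro i
      have hsub : {x : Set.Iio α | f x = i} ⊆
          (fun y : Set.Iio (A (i + 1)) => (⟨y.1, lt_trans y.2 (hA (i + 1))⟩ : Set.Iio α)) ''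
            {y | t (i + 1) y = i} := by
        intro x hx
        have hx' : f x = i := hx
        have hxi : x.1 < A (i + 1) := by
          by_contra hc
          obtain ⟨m, hm⟩ : ∃ m, Nat.find (hcof x) = m + 1 := by
            cases hN0 : Nat.find (hcof x) with
            | zero =>
              exfalso
              have h3 := hNlt x
              rw [hN0] at h3
              exact not_lt_zero h3
            | succ m => exact ⟨m, rfl⟩
          have hnot : ¬ x.1 < A m := Nat.find_min (hcof x) (by omega)
          have h1 : x.1 < A (m + 1) := by rw [← hm]; exact hNlt x
          have h2 : m ≤ f x := hlow x m hnot h1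
          rw [hx'] at h2
          exact hc (lt_of_lt_of_le h1 (hmono (by omega)))
        refine ⟨⟨x.1, hxi⟩, ?_, Subtype.ext rfl⟩
        show t (i + 1) _ = i
        rw [← hf_eq x (i + 1) hxi]
        exact hx'
      exact ((hfin_t (i + 1) i).image _).subset hsub
    refine ⟨f, hfinf, ?_⟩
    intro β hβ
    obtain ⟨n, hn⟩ := hcof ⟨β, hβ⟩
    have hβA : β ≤ A n := hn.le
    have hsub : {x : Set.Iio β | f (emb hβ.le x) ≠ g β x} ⊆
        (emb hβA ⁻¹' {y : Set.Iio (A n) | t n y ≠ g (A n) y}) ∪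
        {x : Set.Iio β | g (A n) (emb hβA x) ≠ g β x} := by
      intro x hx
      have hx' : f (emb hβ.le x) ≠ g β x := hx
      by_cases h2 : g (A n) (emb hβA x) = g β x
      · left
        show t n (emb hβA x) ≠ g (A n) (emb hβA x)
        have hv : (emb hβ.le x).1 < A n := lt_of_lt_of_le x.2 hβA
        have heq : f (emb hβ.le x) = t n (emb hβA x) := by
          rw [hf_eq (emb hβ.le x) n hv]
          exact congrArg (t n) (Subtype.ext rfl)
        rw [← heq, h2]
        exact hx'
      · right; exact h2
    refine (Set.Finite.union ?_ ?_).subset hsub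
    · exact (hclose n).preimage ((emb_inj hβA).injOn)
    · have h4 := hcoh β (A n) hn (hA n)
      exact h4.subset (fun x hx => hx)
  
open scoped Classical in
/-- The coherent family, by transfinite recursion with choice. -/
def F (α : Ordinal) : Set.Iio α → ℕ :=
  if h : ∃ f : Set.Iio α → ℕ, FinOne f ∧ ∀ β (hβ : β < α), Agree hβ.le f (F β)
  then h.choose else fun _ => 0
termination_by α
decreasing_by all_goals exact hβ

def Good (α : Ordinal) : Prop :=
  ∃ f : Set.Iio α → ℕ, FinOne f ∧ ∀ β (hβ : β < α), Agree hβ.le f (F β)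

lemma F_spec {α : Ordinal} (h : Good α) :
    FinOne (F α) ∧ ∀ β (hβ : β < α), Agree hβ.le (F α) (F β) := by
  have hF : F α = h.choose := by
    rw [F]
    exact dif_pos h
  rw [hF]
  exact h.choose_spec

lemma allGood : ∀ α, α < (aleph 1).ord → Good α := by
  intro α
  induction α using Ordinal.induction with
  | h α IH =>
    intro hα
    obtain ⟨f, hf1, hf2⟩ := extend α hα F
      (fun β hβ => (F_spec (IH β hβ (hβ.trans hα))).1)
      (fun β γ h hγ => (F_spec (IH γ hγ (hγ.trans hα))).2 β h)
    exact ⟨f, hf1, hf2⟩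

end
end CohFam

open CohFam in
/-- There exists a coherent family of finite-to-one functions
`⟨φ_α : α → ω | α < ω₁⟩`: (1) for `α < β < ω₁` the functions `φ_α` and `φ_β ↾ α`
differ at only finitely many coordinates, and (2) each `φ_α` is finite-to-one. -/
theorem exists_coherent_finite_to_one_family :
    ∃ φ : (α : Ordinal) → α < (Cardinal.aleph 1).ord → (Set.Iio α → ℕ),
      (∀ (α β : Ordinal) (hα : α < (Cardinal.aleph 1).ord)
          (hβ : β < (Cardinal.aleph 1).ord) (hαβ : α < β),
          {x : Set.Iio α | φ α hα x ≠ φ β hβ ⟨x.1, lt_trans x.2 hαβ⟩}.Finite) ∧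
      (∀ (α : Ordinal) (hα : α < (Cardinal.aleph 1).ord) (i : ℕ),
          {x : Set.Iio α | φ α hα x = i}.Finite) := by
  refine ⟨fun α _ => F α, ?_, ?_⟩
  · intro α β hα hβ hαβ
    have h := (F_spec (allGood β hβ)).2 α hαβ
    refine h.subset ?_
    intro x hx
    have hx' : F α x ≠ F β ⟨x.1, lt_trans x.2 hαβ⟩ := hx
    show F β (emb hαβ.le x) ≠ F α x
    intro hc
    apply hx'
    rw [← hc]
    exact (congrArg (F β) (Subtype.ext rfl)).symm
  · intro α hα i
    exact (F_spec (allGood α hα)).1 i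
end

section
/- If Φ = ⟨φ_α : α → ω | α < ω₁⟩ is a coherent family (φ_α =* φ_β↾α for α < β) such that every φ_α is finite-to-one, then Φ is nontrivial: for every function φ : ω₁ → ω there exists α < ω₁ such that φ_α and φ↾α differ at infinitely many coordinates. -/
open Cardinal Ordinal Set

/-- A coherent family `⟨φ_α : α → ω | α < ω₁⟩` all of whose members are
finite-to-one is nontrivial: for every `φ : ω₁ → ω` there is some `α < ω₁` such that
`φ_α` and `φ ↾ α` differ at infinitely many coordinates. -/
theorem coherent_finite_to_one_is_nontrivial
    (φ : (α : Ordinal) → α < (Cardinal.aleph 1).ord → (Set.Iio α → ℕ))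
    (coh : ∀ (α β : Ordinal) (hα : α < (Cardinal.aleph 1).ord)
        (hβ : β < (Cardinal.aleph 1).ord) (hαβ : α < β),
        {x : Set.Iio α | φ α hα x ≠ φ β hβ ⟨x.1, lt_trans x.2 hαβ⟩}.Finite)
    (f2o : ∀ (α : Ordinal) (hα : α < (Cardinal.aleph 1).ord) (i : ℕ),
        {x : Set.Iio α | φ α hα x = i}.Finite) :
    ∀ ψ : Set.Iio (Cardinal.aleph 1).ord → ℕ,
      ∃ (α : Ordinal) (hα : α < (Cardinal.aleph 1).ord),
        {x : Set.Iio α | φ α hα x ≠ ψ ⟨x.1, lt_trans x.2 hα⟩}.Infinite := by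
  intro ψ
  by_contra h
  push_neg at h
  -- all fibers of ψ cannot be finite, since the domain is uncountable
  obtain ⟨n, hn⟩ : ∃ n, (ψ ⁻¹' {n}).Infinite := by
    by_contra hc
    push_neg at hc
    have huniv : (Set.univ : Set (Set.Iio (Cardinal.aleph 1).ord)) = ⋃ n, ψ ⁻¹' {n} := by
      ext x; simp
    have hcount : (Set.univ : Set (Set.Iio (Cardinal.aleph 1).ord)).Countable := by
      rw [huniv]; exact Set.countable_iUnion fun n => (hc n).countable
    rw [Set.countable_univ_iff] at hcount
    have hle : #(Set.Iio (Cardinal.aleph 1).ord) ≤ ℵ₀ := Cardinal.mk_le_aleph0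
    rw [Ordinal.mk_Iio_ordinal, Cardinal.card_ord, Cardinal.lift_le_aleph0] at hle
    exact absurd hle (Cardinal.aleph0_lt_aleph_one).not_ge
  -- an injection of ℕ into the fiber
  let e := hn.natEmbedding
  set g : ℕ → Ordinal := fun k => ((e k).1 : Ordinal) with hg
  have hglt : ∀ k, g k < (Cardinal.aleph 1).ord := fun k => (e k).1.2
  have hgmem : ∀ k, ψ ⟨g k, hglt k⟩ = n := fun k => (e k).2
  have hginj : Function.Injective g := by
    intro a b hab
    exact e.injective (Subtype.ext (Subtype.ext hab))
  -- bound the range of g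
  have hsup : (⨆ k, g k) < (Cardinal.aleph 1).ord := by
    apply Ordinal.iSup_lt_ord_lift _ hglt
    rw [Cardinal.isRegular_aleph_one.cof_eq, Cardinal.mk_nat, Cardinal.lift_aleph0]
    exact Cardinal.aleph0_lt_aleph_one
  set α : Ordinal := (⨆ k, g k) + 1 with hαdef
  have hα : α < (Cardinal.aleph 1).ord :=
    (isSuccLimit_ord (Cardinal.aleph0_le_aleph 1)).succ_lt hsup
  have hgα : ∀ k, g k < α := fun k =>
    lt_of_le_of_lt (le_ciSup (Ordinal.bddAbove_range _) k) (by rw [hαdef, Ordinal.add_one_eq_succ]; exact Order.lt_succ _)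
  -- the finite difference set
  have hD : {x : Set.Iio α | φ α hα x ≠ ψ ⟨x.1, lt_trans x.2 hα⟩}.Finite :=
    h α hα
  -- range of g inside Iio α
  set G : ℕ → Set.Iio α := fun k => ⟨g k, hgα k⟩ with hG
  have hGinj : Function.Injective G := fun a b hab => hginj (by simpa using congrArg Subtype.val hab)
  have hrange : (Set.range G).Infinite := Set.infinite_range_of_injective hGinj
  have hsub : Set.range G \ {x : Set.Iio α | φ α hα x ≠ ψ ⟨x.1, lt_trans x.2 hα⟩}
      ⊆ {x : Set.Iio α | φ α hα x = n} := by
    rintro x ⟨⟨k, rfl⟩, hx⟩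
    simp only [Set.mem_setOf_eq, not_not] at hx ⊢
    rw [hx]
    exact hgmem k
  exact ((hrange.diff hD).mono hsub) (f2o α hα n)
end

section
/- If λ is an uncountable cardinal and F is a ≤*-increasing chain in the set of functions from λ to ω, then the cofinality of F (as a linear order under ≤*) is at most 2^{<λ}. -/
open Cardinal Set

/-- `f ≤* g`: `f x ≤ g x` for all but finitely many `x`. -/
def LeStar {X : Type*} (f g : X → ℕ) : Prop := {x | ¬ f x ≤ g x}.Finite

universe u


theorem mk_fun_nat {α : Type u} : #(α → ℕ) = (ℵ₀ : Cardinal.{u}) ^ #α := by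
  rw [Cardinal.mk_arrow]; simp

theorem countable_of_segments_finite {α : Type*} [LinearOrder α] {S : Set α}
    (h : ∀ a : α, (S ∩ Set.Iio a).Finite) : S.Countable := by
  rw [Set.countable_iff_exists_injective]
  refine ⟨fun x => (h x.1).toFinset.card, ?_⟩
  have key : ∀ x y : S, (x : α) < y → (h x.1).toFinset.card < (h y.1).toFinset.card := by
    intro x y hxy
    apply Finset.card_lt_card
    rw [Set.Finite.toFinset_ssubset_toFinset]
    constructor
    · intro z hz; exact ⟨hz.1, lt_trans hz.2 hxy⟩
    · intro hsub
      have : (x : α) ∈ S ∩ Set.Iio (x : α) := hsub ⟨x.2, hxy⟩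
      exact absurd this.2 (lt_irrefl _)
  intro x y hxy
  rcases lt_trichotomy (x : α) (y : α) with h' | h' | h'
  · exact absurd hxy (ne_of_lt (key x y h'))
  · exact Subtype.ext h'
  · exact absurd hxy.symm (ne_of_lt (key y x h'))

theorem mk_countables_le {Z : Type u} :
    #{S : Set Z // S.Countable} ≤ (#Z + 1) ^ (ℵ₀ : Cardinal.{u}) := by
  have hsurj : Function.Surjective (fun (f : ℕ → Option Z) =>
      (⟨Option.some ⁻¹' Set.range f,
        (Set.countable_range f).preimage (Option.some_injective Z)⟩ :
        {S : Set Z // S.Countable})) := by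
    rintro ⟨S, hS⟩
    rcases S.eq_empty_or_nonempty with rfl | hne
    · refine ⟨fun _ => none, ?_⟩
      apply Subtype.ext
      ext z
      simp
    · obtain ⟨f, hf⟩ := hS.exists_eq_range hne
      refine ⟨fun n => some (f n), ?_⟩
      apply Subtype.ext
      simp only [hf]
      ext z
      simp
  have h1 := Cardinal.mk_le_of_surjective hsurj
  have h2 : #(ℕ → Option Z) = (#Z + 1) ^ (ℵ₀ : Cardinal.{u}) := by
    rw [Cardinal.mk_arrow, Cardinal.mk_option, Cardinal.mk_nat]
    simp
  rwa [h2] at h1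

theorem no_long_chain {lam θ κ : Cardinal.{u}} (hlam : ℵ₀ < lam)
    (hθdef : θ = 2 ^< lam) (hκdef : κ = Order.succ θ)
    (g : κ.ord.ToType → (lam.ord.ToType → ℕ))
    (hlt : ∀ j k, j < k → LeStar (g j) (g k) ∧ ¬ LeStar (g k) (g j)) : False := by
  classical
  haveI iwoJ : IsWellOrder κ.ord.ToType (· < ·) := isWellOrder_lt
  haveI iwoX : IsWellOrder lam.ord.ToType (· < ·) := isWellOrder_lt
  have hlamθ : lam ≤ θ := by
    by_contra hc
    push_neg at hc
    rw [hθdef] at hc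
    exact absurd (lt_of_lt_of_le (Cardinal.cantor (2 ^< lam)) (Cardinal.le_powerlt 2 hc))
      (lt_irrefl _)
  have hwl : ℵ₀ ≤ lam := hlam.le
  have hθω : ℵ₀ ≤ θ := hwl.trans hlamθ
  have hθκ : θ < κ := hκdef ▸ Order.lt_succ θ
  have hreg : Cardinal.IsRegular κ := hκdef ▸ Cardinal.isRegular_succ hθω
  have hκω : ℵ₀ ≤ κ := hθω.trans hθκ.le
  have hseg : ∀ i : κ.ord.ToType, #{j : κ.ord.ToType // j < i} < κ := by
    intro i
    have h1 : #{j : κ.ord.ToType // j < i} = (Ordinal.typein (α := κ.ord.ToType) (· < ·) i).card :=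
      Ordinal.card_typein (r := ((· < ·) : κ.ord.ToType → κ.ord.ToType → Prop)) i
    rw [h1]
    exact Cardinal.lt_ord.1 (Ordinal.typein_lt_self i)
  have hXcard : #(lam.ord.ToType) = lam := by rw [Cardinal.mk_toType, Cardinal.card_ord]
  have hIio : ∀ a : lam.ord.ToType, #{y : lam.ord.ToType // y < a} < lam := by
    intro a
    have h1 : #{y : lam.ord.ToType // y < a}
        = (Ordinal.typein (α := lam.ord.ToType) (· < ·) a).card :=
      Ordinal.card_typein (r := ((· < ·) : lam.ord.ToType → lam.ord.ToType → Prop)) a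
    rw [h1]
    exact Cardinal.lt_ord.1 (Ordinal.typein_lt_self a)
  have hpat : ∀ a : lam.ord.ToType, #({y : lam.ord.ToType // y < a} → ℕ) ≤ θ := by
    intro a
    rw [mk_fun_nat]
    calc (ℵ₀ : Cardinal.{u}) ^ #{y : lam.ord.ToType // y < a}
        ≤ ((2 : Cardinal.{u}) ^ (ℵ₀ : Cardinal.{u})) ^ #{y : lam.ord.ToType // y < a} :=
          Cardinal.power_le_power_right (Cardinal.cantor ℵ₀).le
      _ = (2 : Cardinal.{u}) ^ ((ℵ₀ : Cardinal.{u}) * #{y : lam.ord.ToType // y < a}) :=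
          (Cardinal.power_mul).symm
      _ ≤ θ := hθdef ▸ Cardinal.le_powerlt 2 (Cardinal.mul_lt_of_lt hwl hlam (hIio a))
  set ρ : ∀ a : lam.ord.ToType, κ.ord.ToType → ({y : lam.ord.ToType // y < a} → ℕ) :=
    fun a j y => g j y.1 with hρdef
  by_cases hgood : ∀ i : κ.ord.ToType, ∃ (a : lam.ord.ToType) (b : κ.ord.ToType),
      ∀ j : κ.ord.ToType, ρ a j = ρ a i → j ≤ b
  · -- Case 1 : all good
    have hT : #(Σ a : lam.ord.ToType, ({y : lam.ord.ToType // y < a} → ℕ)) ≤ θ := by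
      rw [Cardinal.mk_sigma]
      calc Cardinal.sum (fun a : lam.ord.ToType => #({y : lam.ord.ToType // y < a} → ℕ))
          ≤ Cardinal.sum (fun _ : lam.ord.ToType => θ) :=
            Cardinal.sum_le_sum _ _ (fun a => hpat a)
        _ = #(lam.ord.ToType) * θ := Cardinal.sum_const' _ θ
        _ = lam * θ := by rw [hXcard]
        _ ≤ θ * θ := mul_le_mul_left hlamθ θ
        _ = θ := Cardinal.mul_eq_self hθω
    set β : (Σ a : lam.ord.ToType, ({y : lam.ord.ToType // y < a} → ℕ)) → Ordinal.{u} := fun t =>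
      if h : ∃ b : κ.ord.ToType, ∀ j : κ.ord.ToType, ρ t.1 j = t.2 → j ≤ b then
        Ordinal.typein (α := κ.ord.ToType) (· < ·) h.choose
      else 0 with hβdef
    have hβ0 : ∀ t, β t < κ.ord := by
      intro t
      simp only [hβdef]
      by_cases h : ∃ b : κ.ord.ToType, ∀ j : κ.ord.ToType, ρ t.1 j = t.2 → j ≤ b
      · rw [dif_pos h]
        exact Ordinal.typein_lt_self _
      · rw [dif_neg h]
        rw [Cardinal.lt_ord]
        simpa using (aleph0_pos.trans_le hκω)
    have hβ1 : ∀ t, β t + 1 < κ.ord := by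
      intro t
      rw [Cardinal.lt_ord, Ordinal.card_add]
      exact Cardinal.add_lt_of_lt hκω (Cardinal.lt_ord.1 (hβ0 t))
        (by simpa using (one_lt_aleph0.trans_le hκω : (1:Cardinal) < κ))
    have hsup : (⨆ t, β t + 1) < κ.ord := by
      apply Ordinal.iSup_lt_ord _ hβ1
      rw [hreg.cof_eq]
      exact hT.trans_lt hθκ
    obtain ⟨s, hs⟩ := Ordinal.typein_surj (α := κ.ord.ToType) (· < ·)
      (by rw [Ordinal.type_toType]; exact hsup)
    obtain ⟨a, b, hb⟩ := hgood s
    have hbdd : ∃ b : κ.ord.ToType, ∀ j : κ.ord.ToType, ρ a j = ρ a s → j ≤ b := ⟨b, hb⟩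
    have h1 : s ≤ hbdd.choose := hbdd.choose_spec s rfl
    have h2 : β ⟨a, ρ a s⟩ = Ordinal.typein (α := κ.ord.ToType) (· < ·) hbdd.choose := by
      simp only [hβdef]
      exact dif_pos hbdd
    have h3 : Ordinal.typein (α := κ.ord.ToType) (· < ·) s ≤ β ⟨a, ρ a s⟩ := by
      rw [h2]
      exact (Ordinal.typein_le_typein _).2 (not_lt.2 h1)
    have h4 : β ⟨a, ρ a s⟩ + 1 ≤ ⨆ t, β t + 1 :=
      Ordinal.le_iSup (fun t => β t + 1) ⟨a, ρ a s⟩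
    have h5 : β ⟨a, ρ a s⟩ < β ⟨a, ρ a s⟩ + 1 := by
      rw [Ordinal.add_one_eq_succ]; exact Order.lt_succ _
    rw [← hs] at h4
    exact absurd (h3.trans_lt (h5.trans_le h4)) (lt_irrefl _)
  · -- Case 2 : some bad index
    push_neg at hgood
    obtain ⟨i₀, hbad⟩ := hgood
    set B : κ.ord.ToType → Set lam.ord.ToType := fun j => {x | g i₀ x < g j x} with hBdef
    have h2a : ∀ (j : κ.ord.ToType) (a : lam.ord.ToType), (B j ∩ Set.Iio a).Finite := by
      intro j a
      obtain ⟨k, hk1, hk2⟩ := hbad a j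
      have hjk : j < k := hk2
      refine ((hlt j k hjk).1).subset ?_
      rintro x ⟨hx1, hx2⟩
      simp only [hBdef, Set.mem_setOf_eq] at hx1
      simp only [Set.mem_setOf_eq]
      intro hle
      have hgk : g k x = g i₀ x := congrFun hk1 ⟨x, hx2⟩
      exact absurd ((hx1.trans_le hle).trans_eq hgk) (lt_irrefl _)
    have hBc : ∀ j, (B j).Countable := fun j => countable_of_segments_finite (h2a j)
    have hEfin : ∀ {j k : κ.ord.ToType}, j < k → {x | ¬ g j x ≤ g k x}.Finite :=
      fun h => (hlt _ _ h).1
    by_cases hsmall : (2 : Cardinal.{u}) ^ (ℵ₀ : Cardinal.{u}) < θ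
    · -- subcase : continuum < θ
      set c2 := (2 : Cardinal.{u}) ^ (ℵ₀ : Cardinal.{u}) with hc2
      have hsucc : Order.succ c2 ≤ θ := Order.succ_le_of_lt hsmall
      haveI iwoW : IsWellOrder (Order.succ c2).ord.ToType (· < ·) := isWellOrder_lt
      have hWcard : #((Order.succ c2).ord.ToType) = Order.succ c2 := by
        rw [Cardinal.mk_toType, Cardinal.card_ord]
      have hostar : Ordinal.typein (α := κ.ord.ToType) (· < ·) i₀ + 1 + (Order.succ c2).ord
          < κ.ord := by
        rw [Cardinal.lt_ord, Ordinal.card_add, Ordinal.card_add]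
        have h1 := Cardinal.lt_ord.1 (Ordinal.typein_lt_self i₀)
        have h2 : ((Order.succ c2).ord).card < κ := by
          rw [Cardinal.card_ord]; exact hsucc.trans_lt hθκ
        refine Cardinal.add_lt_of_lt hκω (Cardinal.add_lt_of_lt hκω h1 ?_) h2
        simpa using (one_lt_aleph0.trans_le hκω : (1 : Cardinal) < κ)
      obtain ⟨kstar, hkstar⟩ := Ordinal.typein_surj (α := κ.ord.ToType) (· < ·)
        (by rw [Ordinal.type_toType]; exact hostar)
      have hιex : ∀ ξ : (Order.succ c2).ord.ToType, ∃ j : κ.ord.ToType,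
          Ordinal.typein (α := κ.ord.ToType) (· < ·) j
            = Ordinal.typein (α := κ.ord.ToType) (· < ·) i₀ + 1
              + Ordinal.typein (α := (Order.succ c2).ord.ToType) (· < ·) ξ := by
        intro ξ
        have h3 := Ordinal.typein_surj (α := κ.ord.ToType) (· < ·)
          (o := Ordinal.typein (α := κ.ord.ToType) (· < ·) i₀ + 1
              + Ordinal.typein (α := (Order.succ c2).ord.ToType) (· < ·) ξ)
          (by
            rw [Ordinal.type_toType]
            refine lt_trans ?_ hostar
            rw [add_lt_add_iff_left]
            exact Ordinal.typein_lt_self ξ)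
        exact h3
      choose ι hι using hιex
      have hι_gt : ∀ ξ, i₀ < ι ξ := by
        intro ξ
        have h1 : Ordinal.typein (α := κ.ord.ToType) (· < ·) i₀
            < Ordinal.typein (α := κ.ord.ToType) (· < ·) i₀ + 1
              + Ordinal.typein (α := (Order.succ c2).ord.ToType) (· < ·) ξ := by
          refine lt_of_lt_of_le ?_ le_self_add
          rw [Ordinal.add_one_eq_succ]; exact Order.lt_succ _
        rw [← hι ξ] at h1
        exact (Ordinal.typein_lt_typein ((· < ·) : κ.ord.ToType → κ.ord.ToType → Prop)).1 h1
      have hι_ks : ∀ ξ, ι ξ < kstar := by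
        intro ξ
        refine (Ordinal.typein_lt_typein ((· < ·) : κ.ord.ToType → κ.ord.ToType → Prop)).1 ?_
        rw [hι ξ, hkstar, add_lt_add_iff_left]
        exact Ordinal.typein_lt_self ξ
      have hι_inj : Function.Injective ι := by
        intro ξ ξ' h
        have h1 := congrArg (Ordinal.typein (α := κ.ord.ToType) (· < ·)) h
        rw [hι, hι] at h1
        exact Ordinal.typein_injective
          ((· < ·) : (Order.succ c2).ord.ToType → (Order.succ c2).ord.ToType → Prop)
          ((add_right_inj _).1 h1)
      have hBY : ∀ ξ, (B (ι ξ) \ B kstar).Finite := by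
        intro ξ
        refine (hEfin (hι_ks ξ)).subset ?_
        rintro x ⟨hx1, hx2⟩
        simp only [hBdef, Set.mem_setOf_eq] at hx1 hx2
        simp only [Set.mem_setOf_eq]
        intro hle
        exact hx2 (hx1.trans_le hle)
      set χ : (Order.succ c2).ord.ToType → (↥(B kstar) → ℕ) := fun ξ y => g (ι ξ) y.1 with hχdef
      have hYnat : #(↥(B kstar) → ℕ) ≤ c2 := by
        rw [mk_fun_nat]
        have hY : #(↥(B kstar)) ≤ ℵ₀ := mk_le_aleph0_iff.2 (hBc kstar).to_subtype
        calc (ℵ₀ : Cardinal.{u}) ^ #(↥(B kstar)) ≤ (ℵ₀ : Cardinal.{u}) ^ (ℵ₀ : Cardinal.{u}) :=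
            Cardinal.power_le_power_left Cardinal.aleph0_ne_zero hY
          _ = c2 := by rw [hc2]; exact Cardinal.power_self_eq le_rfl
      have hninj : ¬ Function.Injective χ := by
        intro hinj
        have h1 := (Cardinal.mk_le_of_injective hinj).trans hYnat
        rw [hWcard] at h1
        exact absurd h1 (not_le.2 (Order.lt_succ c2))
      rw [Function.not_injective_iff] at hninj
      obtain ⟨ξ, ξ', hχe, hnee⟩ := hninj
      have key : ∀ ζ ζ', χ ζ = χ ζ' → ι ζ < ι ζ' → False := by
        intro ζ ζ' he hlt'
        refine (hlt _ _ hlt').2 ?_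
        refine Set.Finite.subset (((hBY ζ).union (hBY ζ')).union
          ((hEfin (hι_gt ζ)).union (hEfin (hι_gt ζ')))) ?_
        intro x hx
        simp only [Set.mem_setOf_eq] at hx
        simp only [Set.mem_union, Set.mem_diff, hBdef, Set.mem_setOf_eq]
        by_cases hxY : x ∈ B kstar
        · exfalso
          have h0 : g (ι ζ) x = g (ι ζ') x := congrFun he ⟨x, hxY⟩
          exact hx (le_of_eq h0.symm)
        · by_cases h1 : g i₀ x ≤ g (ι ζ) x
          · by_cases h2 : g i₀ x ≤ g (ι ζ') x
            · by_cases hB1 : g i₀ x < g (ι ζ) x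
              · exact Or.inl (Or.inl ⟨hB1, hxY⟩)
              · by_cases hB2 : g i₀ x < g (ι ζ') x
                · exact Or.inl (Or.inr ⟨hB2, hxY⟩)
                · exfalso
                  have e1 : g (ι ζ) x = g i₀ x := le_antisymm (not_lt.1 hB1) h1
                  have e2 : g (ι ζ') x = g i₀ x := le_antisymm (not_lt.1 hB2) h2
                  exact hx (le_of_eq (e2.trans e1.symm))
            · exact Or.inr (Or.inr h2)
          · exact Or.inr (Or.inl h1)
      rcases lt_trichotomy (ι ξ) (ι ξ') with h | h | h
      · exact key ξ ξ' hχe h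
      · exact hnee (hι_inj h)
      · exact key ξ' ξ hχe.symm h
    · -- subcase : θ ≤ continuum
      have hθc : θ ≤ (2 : Cardinal.{u}) ^ (ℵ₀ : Cardinal.{u}) := not_lt.1 hsmall
      have hcθ : (2 : Cardinal.{u}) ^ (ℵ₀ : Cardinal.{u}) ≤ θ := by
        rw [hθdef]; exact Cardinal.le_powerlt 2 hlam
      set Γ : {j : κ.ord.ToType // i₀ < j} → {S : Set (lam.ord.ToType × ℕ) // S.Countable} :=
        fun j => ⟨(fun x => (x, g j.1 x)) '' (B j.1), ((hBc j.1).image _)⟩ with hΓdef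
      have hcount : #({S : Set (lam.ord.ToType × ℕ) // S.Countable}) ≤ θ := by
        refine (mk_countables_le).trans ?_
        have hXN : #(lam.ord.ToType × ℕ) = lam := by
          have h0 : #(lam.ord.ToType × ℕ) = lam * ℵ₀ := by
            rw [Cardinal.mk_prod, hXcard]; simp
          rw [h0, Cardinal.mul_aleph0_eq hwl]
        rw [hXN, Cardinal.add_one_eq hwl]
        calc lam ^ (ℵ₀ : Cardinal.{u})
            ≤ ((2 : Cardinal.{u}) ^ (ℵ₀ : Cardinal.{u})) ^ (ℵ₀ : Cardinal.{u}) :=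
            Cardinal.power_le_power_right (hlamθ.trans hθc)
          _ = (2 : Cardinal.{u}) ^ ((ℵ₀ : Cardinal.{u}) * ℵ₀) := (Cardinal.power_mul).symm
          _ = (2 : Cardinal.{u}) ^ (ℵ₀ : Cardinal.{u}) := by rw [Cardinal.aleph0_mul_aleph0]
          _ ≤ θ := hcθ
      have hIoi : ¬ #{j : κ.ord.ToType // i₀ < j} ≤ θ := by
        intro hle
        have hIioc : #(Set.Iio i₀ : Set (κ.ord.ToType)) ≤ θ := by
          have h0 : #(Set.Iio i₀ : Set (κ.ord.ToType)) < κ := hseg i₀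
          exact Order.lt_succ_iff.1 (h0.trans_le hκdef.le)
        have hIic : #(Set.Iic i₀ : Set (κ.ord.ToType)) ≤ θ := by
          rw [← Set.Iio_insert]
          refine (Cardinal.mk_insert_le).trans ?_
          calc #(Set.Iio i₀ : Set (κ.ord.ToType)) + 1 ≤ θ + 1 := add_le_add_left hIioc 1
            _ = θ := Cardinal.add_one_eq hθω
        have hcompl := Cardinal.mk_sum_compl (Set.Iic i₀ : Set (κ.ord.ToType))
        rw [Set.compl_Iic] at hcompl
        have hJ : #(κ.ord.ToType) = κ := by rw [Cardinal.mk_toType, Cardinal.card_ord]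
        have hIoi' : #(Set.Ioi i₀ : Set (κ.ord.ToType)) ≤ θ := hle
        have hκeq : κ = #(Set.Iic i₀ : Set (κ.ord.ToType)) + #(Set.Ioi i₀ : Set (κ.ord.ToType)) := by
          rw [hcompl, hJ]
        have hfin : κ ≤ θ := by
          rw [hκeq]
          exact (add_le_add hIic hIoi').trans (Cardinal.add_eq_self hθω).le
        exact absurd hfin (not_le.2 hθκ)
      have hninj : ¬ Function.Injective Γ := fun hinj =>
        hIoi ((Cardinal.mk_le_of_injective hinj).trans hcount)
      rw [Function.not_injective_iff] at hninj
      obtain ⟨j, j', hΓe, hnee⟩ := hninj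
      have hBeq : ∀ u v : {j : κ.ord.ToType // i₀ < j}, Γ u = Γ v →
          ∀ x, x ∈ B u.1 → x ∈ B v.1 ∧ g v.1 x = g u.1 x := by
        intro u v he x hx
        have h1 : (x, g u.1 x) ∈ (fun x => (x, g v.1 x)) '' (B v.1) := by
          have h2 : (fun x => (x, g u.1 x)) '' (B u.1) = (fun x => (x, g v.1 x)) '' (B v.1) := by
            have := congrArg Subtype.val he
            simpa [hΓdef] using this
          rw [← h2]
          exact ⟨x, hx, rfl⟩
        obtain ⟨x', hx', hxx⟩ := h1
        have e1 : x' = x := congrArg Prod.fst hxx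
        have e2 : g v.1 x' = g u.1 x := congrArg Prod.snd hxx
        subst e1
        exact ⟨hx', e2⟩
      have key : ∀ u v : {j : κ.ord.ToType // i₀ < j}, Γ u = Γ v → u.1 < v.1 → False := by
        intro u v he hlt'
        refine (hlt _ _ hlt').2 ?_
        refine Set.Finite.subset ((hEfin u.2).union (hEfin v.2)) ?_
        intro x hx
        simp only [Set.mem_setOf_eq] at hx
        simp only [Set.mem_union, Set.mem_setOf_eq]
        by_contra hnx
        push_neg at hnx
        obtain ⟨h1, h2⟩ := hnx
        apply hx
        by_cases hB : x ∈ B u.1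
        · exact le_of_eq ((hBeq u v he x hB).2)
        · have hB2 : x ∉ B v.1 := fun hxB => hB ((hBeq v u he.symm x hxB).1)
          have hBl : ¬ g i₀ x < g u.1 x := by simpa [hBdef] using hB
          have hBl2 : ¬ g i₀ x < g v.1 x := by simpa [hBdef] using hB2
          have e1 : g u.1 x = g i₀ x := le_antisymm (not_lt.1 hBl) h1
          have e2 : g v.1 x = g i₀ x := le_antisymm (not_lt.1 hBl2) h2
          exact le_of_eq (e2.trans e1.symm)
      rcases lt_trichotomy j.1 j'.1 with h | h | h
      · exact key j j' hΓe h
      · exact hnee (Subtype.ext h)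
      · exact key j' j hΓe.symm h

/-- If `λ` is an uncountable cardinal and `F` is a `≤*`-increasing chain
in `^λω`, then the cofinality of `F` is at most `2^{<λ}`: there is a `≤*`-cofinal subset
of `F` of cardinality at most `2^{<λ}`. -/
theorem chain_cofinality_le_powerlt (lam : Cardinal) (hlam : Cardinal.aleph 0 < lam)
    (F : Set (lam.ord.ToType → ℕ))
    (hchain : IsChain LeStar F) :
    ∃ D ⊆ F, (∀ f ∈ F, ∃ g ∈ D, LeStar f g) ∧ Cardinal.mk D ≤ 2 ^< lam := by
  classical
  have hlam' : ℵ₀ < lam := by rwa [Cardinal.aleph_zero] at hlam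
  by_contra hno
  push_neg at hno
  -- hno : ∀ D ⊆ F, (cofinal) → ¬ #D ≤ 2 ^< lam
  haveI iwoJ : IsWellOrder (Order.succ (2 ^< lam)).ord.ToType (· < ·) := isWellOrder_lt
  have wf : WellFounded ((· < ·) :
      (Order.succ (2 ^< lam)).ord.ToType → (Order.succ (2 ^< lam)).ord.ToType → Prop) :=
    iwoJ.wf
  set step : ∀ i : (Order.succ (2 ^< lam)).ord.ToType,
      (∀ j, j < i → (lam.ord.ToType → ℕ)) → (lam.ord.ToType → ℕ) := fun i rec =>
    if h : ∃ u, u ∈ F ∧ ∀ (j) (hj : j < i), ¬ LeStar u (rec j hj) then h.choose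
    else fun _ => 0 with hstep
  set g : (Order.succ (2 ^< lam)).ord.ToType → (lam.ord.ToType → ℕ) :=
    WellFounded.fix wf step with hg
  have gdef : ∀ i, g i = step i (fun j _ => g j) := fun i => WellFounded.fix_eq wf step i
  have hseg : ∀ i : (Order.succ (2 ^< lam)).ord.ToType, #{j // j < i} ≤ 2 ^< lam := by
    intro i
    have h1 : #{j // j < i} = (Ordinal.typein
        (α := (Order.succ (2 ^< lam)).ord.ToType) (· < ·) i).card :=
      Ordinal.card_typein (r := ((· < ·) : (Order.succ (2 ^< lam)).ord.ToType →
        (Order.succ (2 ^< lam)).ord.ToType → Prop)) i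
    rw [h1]
    exact Order.lt_succ_iff.1 (Cardinal.lt_ord.1 (Ordinal.typein_lt_self i))
  have hP : ∀ i, g i ∈ F ∧ ∀ j, j < i → ¬ LeStar (g i) (g j) := by
    intro i
    refine wf.induction (C := fun i => g i ∈ F ∧ ∀ j, j < i → ¬ LeStar (g i) (g j)) i ?_
    intro i IH
    have hDsub : g '' {j | j < i} ⊆ F := by
      rintro _ ⟨j, hj, rfl⟩
      exact (IH j hj).1
    have hDcard : #(g '' {j | j < i}) ≤ 2 ^< lam :=
      le_trans Cardinal.mk_image_le (hseg i)
    have hnotcof : ¬ ∀ u ∈ F, ∃ d ∈ g '' {j | j < i}, LeStar u d := fun hcof =>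
      absurd hDcard (not_le.2 (hno (g '' {j | j < i}) hDsub hcof))
    push_neg at hnotcof
    obtain ⟨u, huF, hu⟩ := hnotcof
    have hex : ∃ u, u ∈ F ∧ ∀ (j) (hj : j < i), ¬ LeStar u (g j) :=
      ⟨u, huF, fun j hj => hu (g j) ⟨j, hj, rfl⟩⟩
    have hgi : g i = hex.choose := by
      rw [gdef i, hstep]
      exact dif_pos hex
    rw [hgi]
    exact ⟨hex.choose_spec.1, fun j hj => hex.choose_spec.2 j hj⟩
  refine no_long_chain hlam' rfl rfl g (fun j k hjk => ?_)
  have h2 : ¬ LeStar (g k) (g j) := (hP k).2 j hjk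
  have hne : g j ≠ g k := by
    intro he
    apply h2
    rw [he]
    simp [LeStar]
  rcases hchain (hP j).1 (hP k).1 hne with h | h
  · exact ⟨h, h2⟩
  · exact absurd h h2
end

section
/- Let P = ⋃_{i<ω} P_i be an increasing union of ≤*-order-ideals P_i ⊆ ^{ω_n}ω, each of countable cofinality and each ≤-directed, and suppose each P_i has a 0-twistable set X_i (a countably infinite X_i ⊆ ω_n × ω whose intersection with I(f) is finite for all f ∈ P_i). Then ⋃_{i<ω} X_i contains a 0-twistable set for P. -/
open Cardinal Set

/-- The *sottografico* of `f`: pairs `(i, j)` with `1 ≤ j ≤ f i`. -/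
def Sotto {X : Type*} (f : X → ℕ) : Set (X × ℕ) := {p | 1 ≤ p.2 ∧ p.2 ≤ f p.1}

/-- `E` is a 0-twistable set for `P`: countably infinite, with finite intersection
with every sottografico of a member of `P`. -/
def ZeroTwistable {X : Type*} (P : Set (X → ℕ)) (E : Set (X × ℕ)) : Prop :=
  E.Infinite ∧ E.Countable ∧ ∀ f ∈ P, (E ∩ Sotto f).Finite

noncomputable def pickList {γ : Type*} (S : ℕ → Set γ) (hS : ∀ k, (S k).Infinite) : ℕ → List γ
  | 0 => []
  | (k+1) => pickList S hS k ++ [((hS k).diff (pickList S hS k).finite_toSet).nonempty.some]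

noncomputable def pickElem {γ : Type*} (S : ℕ → Set γ) (hS : ∀ k, (S k).Infinite) (k : ℕ) : γ :=
  ((hS k).diff (pickList S hS k).finite_toSet).nonempty.some

lemma pickElem_mem {γ : Type*} (S : ℕ → Set γ) (hS : ∀ k, (S k).Infinite) (k : ℕ) :
    pickElem S hS k ∈ S k \ {x | x ∈ pickList S hS k} :=
  ((hS k).diff (pickList S hS k).finite_toSet).nonempty.some_mem

lemma pickElem_mem_list {γ : Type*} (S : ℕ → Set γ) (hS : ∀ k, (S k).Infinite)
    {j k : ℕ} (h : j < k) : pickElem S hS j ∈ pickList S hS k := by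
  induction k with
  | zero => omega
  | succ k ih =>
    rcases Nat.lt_succ_iff_lt_or_eq.mp h with h' | h'
    · simp [pickList, ih h']
    · subst h'; simp [pickList, pickElem]

lemma exists_inj_seq {γ : Type*} (S : ℕ → Set γ) (hS : ∀ k, (S k).Infinite) :
    ∃ e : ℕ → γ, Function.Injective e ∧ ∀ k, e k ∈ S k := by
  refine ⟨pickElem S hS, ?_, fun k => (pickElem_mem S hS k).1⟩
  have key : ∀ j k, j < k → pickElem S hS j ≠ pickElem S hS k := by
    intro j k h heq
    exact (pickElem_mem S hS k).2 (heq ▸ pickElem_mem_list S hS h)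
  intro a b hab
  rcases lt_trichotomy a b with h | h | h
  · exact absurd hab (key a b h)
  · exact h
  · exact absurd hab.symm (key b a h)

lemma exists_chain {α : Type*} [Preorder α] (Q : ℕ → Set α) (hmono : ∀ k, Q k ⊆ Q (k+1))
    (hdir : ∀ k, DirectedOn (· ≤ ·) (Q k)) (h0 : (Q 0).Nonempty)
    (t : ℕ → α) (ht : ∀ k, t k ∈ Q (k+1)) :
    ∃ g : ℕ → α, (∀ k, g k ∈ Q k) ∧ Monotone g ∧ (∀ k, t k ≤ g (k+1)) := by
  have step : ∀ k (x : {x // x ∈ Q k}), {y : {x // x ∈ Q (k+1)} // x.1 ≤ y.1 ∧ t k ≤ y.1} := by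
    intro k x
    have h := hdir (k+1) x.1 (hmono k x.2) (t k) (ht k)
    exact ⟨⟨h.choose, h.choose_spec.1⟩, h.choose_spec.2⟩
  let g : ∀ k, {x // x ∈ Q k} := fun k =>
    Nat.rec ⟨h0.some, h0.some_mem⟩ (fun k x => (step k x).1) k
  have hsucc : ∀ k, g (k+1) = (step k (g k)).1 := fun k => rfl
  refine ⟨fun k => (g k).1, fun k => (g k).2, ?_, ?_⟩
  · exact monotone_nat_of_le_succ fun k => by
      show (g k).1 ≤ (g (k+1)).1; rw [hsucc k]; exact (step k (g k)).2.1
  · intro k; show t k ≤ (g (k+1)).1; rw [hsucc k]; exact (step k (g k)).2.2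

lemma zero_twistable_aux {X : Type*} (P : ℕ → Set (X → ℕ))
    (hmono : ∀ i j : ℕ, i ≤ j → P i ⊆ P j)
    (hdir : ∀ i : ℕ, DirectedOn (· ≤ ·) (P i))
    (hcof : ∀ i : ℕ, ∃ D ⊆ P i, D.Countable ∧ ∀ f ∈ P i, ∃ h ∈ D, LeStar f h)
    (E : ℕ → Set (X × ℕ))
    (htw : ∀ i : ℕ, ZeroTwistable (P i) (E i))
    (hne : ∀ i, (P i).Nonempty) :
    ∃ E' ⊆ ⋃ i, E i, ZeroTwistable (⋃ i, P i) E' := by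
  -- countable cofinal sequences
  have hD : ∀ i, ∃ d : ℕ → (X → ℕ), (∀ j, d j ∈ P i) ∧ ∀ f ∈ P i, ∃ j, LeStar f (d j) := by
    intro i
    obtain ⟨D, hDP, hDc, hDcof⟩ := hcof i
    obtain ⟨f0, hf0⟩ := hne i
    obtain ⟨h0, hh0, -⟩ := hDcof f0 hf0
    obtain ⟨dd, hdd⟩ := hDc.exists_eq_range ⟨h0, hh0⟩
    refine ⟨dd, fun j => hDP (hdd ▸ mem_range_self j), fun f hf => ?_⟩
    obtain ⟨h, hh, hfh⟩ := hDcof f hf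
    rw [hdd] at hh; obtain ⟨j, rfl⟩ := hh; exact ⟨j, hfh⟩
  choose d hd1 hd2 using hD
  -- diagonal chain
  set t : ℕ → (X → ℕ) := fun k => d (Nat.unpair k).1 (Nat.unpair k).2 with ht_def
  have ht : ∀ k, t k ∈ P (k+1) := fun k =>
    hmono (Nat.unpair k).1 (k+1) (le_trans (Nat.unpair_left_le k) (Nat.le_succ k))
      (hd1 _ _)
  obtain ⟨g, hg1, hg2, hg3⟩ :=
    exists_chain P (fun k => hmono k (k+1) (Nat.le_succ k)) hdir (hne 0) t ht
  -- pick injective sequence avoiding the sottografici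
  have hSinf : ∀ k, (E k \ Sotto (g k)).Infinite := by
    intro k
    have h2 := (htw k).2.2 (g k) (hg1 k)
    have h3 := (htw k).1.diff h2
    rwa [Set.diff_self_inter] at h3
  obtain ⟨e, hinj, he⟩ := exists_inj_seq _ hSinf
  refine ⟨Set.range e, ?_, ?_, ?_, ?_⟩
  · rintro p ⟨k, rfl⟩; exact mem_iUnion.mpr ⟨k, (he k).1⟩
  · exact Set.infinite_range_of_injective hinj
  · exact Set.countable_range e
  · intro f hf
    obtain ⟨m, hm⟩ := mem_iUnion.mp hf
    obtain ⟨j, hj⟩ := hd2 m f hm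
    set c := Nat.pair m j with hc
    have hdg : ∀ k, c < k → d m j ≤ g k := by
      intro k hk
      have h1 : t c ≤ g (c+1) := hg3 c
      have h2 : t c = d m j := by simp [ht_def, hc]
      exact le_trans (h2 ▸ h1) (hg2 hk)
    have hF : {x | ¬ f x ≤ d m j x}.Finite := hj
    have hfin2 : (⋃ x ∈ {x | ¬ f x ≤ d m j x}, (Prod.mk x) '' Set.Icc 1 (f x)).Finite :=
      hF.biUnion fun x _ => (Set.finite_Icc 1 (f x)).image _
    apply Set.Finite.subset (((Set.finite_Iio (c+1)).image e).union hfin2)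
    rintro p ⟨⟨k, rfl⟩, hp⟩
    by_cases hk : k < c + 1
    · exact Or.inl ⟨k, hk, rfl⟩
    · right
      have hgk : d m j ≤ g k := hdg k (by omega)
      have hnot : e k ∉ Sotto (g k) := (he k).2
      have hx : ¬ f (e k).1 ≤ d m j (e k).1 := by
        intro hle
        exact hnot ⟨hp.1, le_trans (le_trans hp.2 hle) (hgk _)⟩
      exact mem_biUnion hx ⟨(e k).2, ⟨hp.1, hp.2⟩, Prod.mk.eta⟩

/-- If `P = ⋃_{i<ω} P_i` is an increasing union of `≤*`-order-ideals
of `^{ω_n}ω`, each of countable cofinality and each `≤`-directed, with 0-twistable sets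
`X_i`, then `⋃_{i<ω} X_i` contains a 0-twistable set for `P`. -/
theorem zero_twistable_continuity (n : ℕ)
    (P : ℕ → Set ((Cardinal.aleph n).ord.ToType → ℕ))
    (hmono : ∀ i j : ℕ, i ≤ j → P i ⊆ P j)
    (hdc : ∀ i : ℕ, ∀ f g, LeStar f g → g ∈ P i → f ∈ P i)
    (hdir : ∀ i : ℕ, DirectedOn (· ≤ ·) (P i))
    (hcof : ∀ i : ℕ, ∃ D ⊆ P i, D.Countable ∧ ∀ f ∈ P i, ∃ h ∈ D, LeStar f h)
    (E : ℕ → Set ((Cardinal.aleph n).ord.ToType × ℕ))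
    (htw : ∀ i : ℕ, ZeroTwistable (P i) (E i)) :
    ∃ E' ⊆ ⋃ i, E i, ZeroTwistable (⋃ i, P i) E' := by
  by_cases hP : ∃ i0, (P i0).Nonempty
  · obtain ⟨i0, hi0⟩ := hP
    obtain ⟨E', hE'sub, hE'⟩ :=
      zero_twistable_aux (fun i => P (i0 + i))
        (fun i j h => hmono (i0 + i) (i0 + j) (by omega))
        (fun i => hdir _) (fun i => hcof _) (fun i => E (i0 + i)) (fun i => htw _)
        (fun i => hi0.mono (hmono i0 (i0 + i) (by omega)))
    have hPU : (⋃ i, P (i0 + i)) = ⋃ i, P i := by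
      apply Set.Subset.antisymm
      · exact iUnion_subset fun i => subset_iUnion P (i0 + i)
      · exact iUnion_subset fun i =>
          (hmono i (i0 + i) (by omega)).trans (subset_iUnion (fun i => P (i0 + i)) i)
    refine ⟨E', hE'sub.trans (iUnion_subset fun i => subset_iUnion E (i0 + i)), ?_⟩
    rwa [hPU] at hE'
  · push_neg at hP
    refine ⟨E 0, subset_iUnion E 0, (htw 0).1, (htw 0).2.1, ?_⟩
    intro f hf
    obtain ⟨i, hi⟩ := mem_iUnion.mp hf
    rw [hP i] at hi; exact hi.elim
end
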